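/- arXiv:1810.06509 — 10 statements merged into one kernel-verified Lean document; each statement's English description precedes it below -/
import Mathlib

section
/- Let E be a real inner product space, K ⊆ E a convex set, x ∈ E, g ∈ E, and η > 0. Let R : E → ℝ be differentiable with gradient ∇R. If y ∈ K minimizes the function z ↦ η·⟪g, z⟫ + B_R(z‖x) over K, then for every z ∈ K one has ⟪η·g + ∇R(y) − ∇R(x), y − z⟫ ≤ 0. -/
open scoped RealInnerProductSpace

/-- Bregman divergence `B_R(z‖x) = R z − R x − ⟪∇R x, z − x⟫` generated by `R`
with gradient field `gradR`. -/
noncomputable def breg {E : Type*} [NormedAddCommGroup E] [InnerProductSpace ℝ E]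
    (R : E → ℝ) (gradR : E → E) (z x : E) : ℝ :=
  R z - R x - ⟪gradR x, z - x⟫

section

variable {E : Type*} [NormedAddCommGroup E] [InnerProductSpace ℝ E]

theorem IsMinOn.inner_sub_nonpos_of_hasFDerivWithinAt {F : E → ℝ} {K : Set E} {v y z : E}
    (hK : Convex ℝ K) (hmin : IsMinOn F K y) (hF : HasFDerivWithinAt F (innerSL ℝ v) K y)
    (hy : y ∈ K) (hz : z ∈ K) : ⟪v, y - z⟫ ≤ 0 := by
  have hcone : z - y ∈ posTangentConeAt K y :=
    sub_mem_posTangentConeAt_of_segment_subset (hK.segment_subset hy hz)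
  have hdir : 0 ≤ ⟪v, z - y⟫ := hmin.localize.hasFDerivWithinAt_nonneg hF hcone
  rw [← neg_sub z y, inner_neg_right]
  exact neg_nonpos.mpr hdir

theorem hasFDerivAt_breg_left {R : E → ℝ} {gradR : E → E} {x y : E}
    (hR : HasFDerivAt R (innerSL ℝ (gradR y)) y) :
    HasFDerivAt (fun z => breg R gradR z x) (innerSL ℝ (gradR y - gradR x)) y := by
  have hlin : HasFDerivAt (fun z => ⟪gradR x, z - x⟫) (innerSL ℝ (gradR x)) y :=
    (innerSL ℝ (gradR x)).hasFDerivAt.comp y ((hasFDerivAt_id y).sub_const x)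
  rw [map_sub]
  exact (hR.sub_const (R x)).sub hlin

theorem hasFDerivAt_mirrorDescent_objective {R : E → ℝ} {gradR : E → E} {x y g : E} (η : ℝ)
    (hR : HasFDerivAt R (innerSL ℝ (gradR y)) y) :
    HasFDerivAt (fun z => η * ⟪g, z⟫ + breg R gradR z x)
      (innerSL ℝ (η • g + gradR y - gradR x)) y := by
  rw [add_sub_assoc, map_add, map_smul]
  exact ((innerSL ℝ g).hasFDerivAt.const_mul η).add (hasFDerivAt_breg_left hR)

end

theorem mirror_descent_first_order_optimality_general
    {E : Type*} [NormedAddCommGroup E] [InnerProductSpace ℝ E]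
    (K : Set E) (hK : Convex ℝ K) (x g : E) (η : ℝ)
    (R : E → ℝ) (gradR : E → E)
    (hR : ∀ p : E, HasFDerivAt R (innerSL ℝ (gradR p)) p)
    (y : E) (hy : y ∈ K)
    (hmin : ∀ z ∈ K, η * ⟪g, y⟫ + breg R gradR y x ≤ η * ⟪g, z⟫ + breg R gradR z x) :
    ∀ z ∈ K, ⟪η • g + gradR y - gradR x, y - z⟫ ≤ 0 := fun _ hz =>
  IsMinOn.inner_sub_nonpos_of_hasFDerivWithinAt hK (isMinOn_iff.mpr hmin)
    (hasFDerivAt_mirrorDescent_objective η (hR y)).hasFDerivWithinAt hy hz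

theorem mirror_descent_first_order_optimality
    {E : Type*} [NormedAddCommGroup E] [InnerProductSpace ℝ E]
    (K : Set E) (hK : Convex ℝ K) (x g : E) (η : ℝ) (hη : 0 < η)
    (R : E → ℝ) (gradR : E → E)
    (hR : ∀ p : E, HasFDerivAt R (innerSL ℝ (gradR p)) p)
    (y : E) (hy : y ∈ K)
    (hmin : ∀ z ∈ K, η * ⟪g, y⟫ + breg R gradR y x ≤ η * ⟪g, z⟫ + breg R gradR z x) :
    ∀ z ∈ K, ⟪η • g + gradR y - gradR x, y - z⟫ ≤ 0 :=
  mirror_descent_first_order_optimality_general K hK x g η R gradR hR y hy hmin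
end

section
/- Let E be a real inner product space, K ⊆ E a set, x ∈ E, g ∈ E, η > 0, and let R : E → ℝ be differentiable with gradient ∇R. Suppose y ∈ K satisfies the first-order optimality condition ⟪η·g + ∇R(y) − ∇R(x), y − z⟫ ≤ 0 for all z ∈ K (as holds when y minimizes z ↦ η·⟪g, z⟫ + B_R(z‖x) over a convex set K). Then for every z ∈ K: η·⟪g, y − z⟫ ≤ B_R(z‖x) − B_R(z‖y) − B_R(y‖x). -/
open scoped RealInnerProductSpace

theorem breg_three_point {E : Type*} [NormedAddCommGroup E] [InnerProductSpace ℝ E]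
    (R : E → ℝ) (gradR : E → E) (x y z : E) :
    breg R gradR z x - breg R gradR z y - breg R gradR y x = ⟪gradR y - gradR x, z - y⟫ := by
  simp only [breg, inner_sub_left, inner_sub_right]
  ring

theorem mirror_descent_new_decision_bound_general
    {E : Type*} [NormedAddCommGroup E] [InnerProductSpace ℝ E]
    (K : Set E) (x g : E) (η : ℝ)
    (R : E → ℝ) (gradR : E → E)
    (y : E)
    (hopt : ∀ z ∈ K, ⟪η • g + gradR y - gradR x, y - z⟫ ≤ 0) :
    ∀ z ∈ K, η * ⟪g, y - z⟫ ≤ breg R gradR z x - breg R gradR z y - breg R gradR y x := by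
  intro z hz
  have hsplit : ⟪η • g + gradR y - gradR x, y - z⟫
      = η * ⟪g, y - z⟫ - ⟪gradR y - gradR x, z - y⟫ := by
    simp only [inner_add_left, inner_sub_left, inner_sub_right, real_inner_smul_left]
    ring
  rw [breg_three_point]
  linarith [hopt z hz]

/-- Lemma 5, inequality (16): the "new decision" bound of mirror descent. -/
theorem mirror_descent_new_decision_bound
    {E : Type*} [NormedAddCommGroup E] [InnerProductSpace ℝ E]
    (K : Set E) (x g : E) (η : ℝ) (hη : 0 < η)
    (R : E → ℝ) (gradR : E → E)
    (hR : ∀ p : E, HasFDerivAt R (innerSL ℝ (gradR p)) p)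
    (y : E) (hy : y ∈ K)
    (hopt : ∀ z ∈ K, ⟪η • g + gradR y - gradR x, y - z⟫ ≤ 0) :
    ∀ z ∈ K, η * ⟪g, y - z⟫ ≤ breg R gradR z x - breg R gradR z y - breg R gradR y x :=
  mirror_descent_new_decision_bound_general K x g η R gradR y hopt
end

section
/- Let E be a real inner product space, K ⊆ E a set, x ∈ E, g ∈ E, η > 0, and let R : E → ℝ be differentiable with gradient ∇R and 1-strongly convex on E. Suppose y ∈ K satisfies the first-order optimality condition ⟪η·g + ∇R(y) − ∇R(x), y − z⟫ ≤ 0 for all z ∈ K (as holds when y minimizes z ↦ η·⟪g, z⟫ + B_R(z‖x) over a convex set K). Then for every z ∈ K: η·⟪g, x − z⟫ ≤ B_R(z‖x) − B_R(z‖y) + (η²/2)·‖g‖². -/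
open scoped RealInnerProductSpace

/-- `F` is `α`-strongly convex on the set `K`. -/
def StrongConvexOnSet {E : Type*} [NormedAddCommGroup E] [NormedSpace ℝ E]
    (K : Set E) (α : ℝ) (F : E → ℝ) : Prop :=
  ∀ ⦃x⦄, x ∈ K → ∀ ⦃y⦄, y ∈ K → ∀ ⦃t : ℝ⦄, 0 ≤ t → t ≤ 1 →
    F (t • x + (1 - t) • y) ≤ t * F x + (1 - t) * F y - α / 2 * t * (1 - t) * ‖x - y‖ ^ 2

/-!
The optimality condition bounds `η ⟪g, y - z⟫` by `⟪∇R x - ∇R y, y - z⟫`, which by the three-point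
identity equals `B_R(z‖x) - B_R(z‖y) - B_R(y‖x)`. The remaining term `η ⟪g, x - y⟫` is at most
`η²/2 ‖g‖² + ½ ‖x - y‖²`, and strong convexity gives `½ ‖y - x‖² ≤ B_R(y‖x)`.
-/

section Bregman

variable {E : Type*} [NormedAddCommGroup E] [InnerProductSpace ℝ E]

theorem StrongConvexOnSet.strongConvexOn {K : Set E} {α : ℝ} {F : E → ℝ}
    (hK : Convex ℝ K) (hF : StrongConvexOnSet K α F) : StrongConvexOn K α F := by
  refine ⟨hK, fun x hx y hy a b ha hb hab => ?_⟩
  obtain rfl : b = 1 - a := by linarith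
  have := hF hx hy ha (by linarith)
  simp only [smul_eq_mul]
  linarith

theorem ConvexOn.le_sub_of_hasFDerivAt {s : Set E} {F : E → ℝ} {F' : E →L[ℝ] ℝ} {x z : E}
    (hF : ConvexOn ℝ s F) (hx : x ∈ s) (hz : z ∈ s) (hF' : HasFDerivAt F F' x) :
    F' (z - x) ≤ F z - F x := by
  have hline : ConvexOn ℝ (AffineMap.lineMap x z ⁻¹' s) (F ∘ AffineMap.lineMap x z) :=
    hF.comp_affineMap _
  have hderiv : HasDerivAt (F ∘ AffineMap.lineMap x z) (F' (z - x)) (0 : ℝ) := by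
    refine HasFDerivAt.comp_hasDerivAt _ ?_ AffineMap.hasDerivAt_lineMap
    simpa using hF'
  simpa [slope_def_field] using
    hline.le_slope_of_hasDerivAt (by simpa using hx) (by simpa using hz) one_pos hderiv

theorem breg_sub_breg_sub_breg (R : E → ℝ) (gradR : E → E) (x y z : E) :
    breg R gradR z x - breg R gradR z y - breg R gradR y x = ⟪gradR x - gradR y, y - z⟫ := by
  simp only [breg, inner_sub_left, inner_sub_right]
  ring

theorem StrongConvexOn.mul_norm_sub_sq_le_breg {s : Set E} {m : ℝ} {R : E → ℝ} {gradR : E → E}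
    {x z : E} (hR : StrongConvexOn s m R) (hx : x ∈ s) (hz : z ∈ s)
    (hR' : HasFDerivAt R (innerSL ℝ (gradR x)) x) :
    m / 2 * ‖z - x‖ ^ 2 ≤ breg R gradR z x := by
  have hderiv : HasFDerivAt (fun w => R w - m / 2 * ‖w‖ ^ 2) (innerSL ℝ (gradR x - m • x)) x := by
    refine (hR'.sub ((hasFDerivAt_id x).norm_sq.const_mul (m / 2))).congr_fderiv ?_
    ext w
    simp only [id_eq, ContinuousLinearMap.comp_id, sub_apply, coe_innerSL_apply, smul_apply,
      nsmul_eq_mul, Nat.cast_ofNat, smul_eq_mul, map_sub, map_smul, sub_right_inj]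
    ring
  have := (strongConvexOn_iff_convex.mp hR).le_sub_of_hasFDerivAt hx hz hderiv
  simp only [innerSL_apply_apply, inner_sub_left, inner_sub_right, real_inner_smul_left,
    real_inner_self_eq_norm_sq] at this
  rw [breg, norm_sub_sq_real, inner_sub_right, real_inner_comm x z]
  linear_combination this

end Bregman

theorem mirror_descent_old_decision_bound_general
    {E : Type*} [NormedAddCommGroup E] [InnerProductSpace ℝ E]
    (K : Set E) (x g : E) (η : ℝ)
    (R : E → ℝ) (gradR : E → E)
    (hR : ∀ p : E, HasFDerivAt R (innerSL ℝ (gradR p)) p)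
    (hsc : StrongConvexOnSet (Set.univ : Set E) 1 R)
    (y : E)
    (hopt : ∀ z ∈ K, ⟪η • g + gradR y - gradR x, y - z⟫ ≤ 0) :
    ∀ z ∈ K, η * ⟪g, x - z⟫ ≤ breg R gradR z x - breg R gradR z y + η ^ 2 / 2 * ‖g‖ ^ 2 := by
  intro z hz
  have hstep : η * ⟪g, y - z⟫ ≤ ⟪gradR x - gradR y, y - z⟫ := by
    have := hopt z hz
    simp only [inner_sub_left, inner_add_left, real_inner_smul_left] at this ⊢
    linarith
  have hdist : 1 / 2 * ‖y - x‖ ^ 2 ≤ breg R gradR y x :=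
    (hsc.strongConvexOn convex_univ).mul_norm_sub_sq_le_breg trivial trivial (hR x)
  have hyoung : η * ⟪g, x - y⟫ ≤ η ^ 2 / 2 * ‖g‖ ^ 2 + 1 / 2 * ‖y - x‖ ^ 2 := by
    have := sq_nonneg ‖η • g - (x - y)‖
    rw [norm_sub_sq_real, norm_smul, real_inner_smul_left, mul_pow, Real.norm_eq_abs, sq_abs,
      norm_sub_rev] at this
    linarith
  have hsplit : ⟪g, x - z⟫ = ⟪g, x - y⟫ + ⟪g, y - z⟫ := by
    rw [← inner_add_right, sub_add_sub_cancel]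
  have hthree := breg_sub_breg_sub_breg R gradR x y z
  rw [hsplit, mul_add]
  linarith

/-- Lemma 5, inequality (17): the "old decision" bound of mirror descent. -/
theorem mirror_descent_old_decision_bound
    {E : Type*} [NormedAddCommGroup E] [InnerProductSpace ℝ E]
    (K : Set E) (x g : E) (η : ℝ) (hη : 0 < η)
    (R : E → ℝ) (gradR : E → E)
    (hR : ∀ p : E, HasFDerivAt R (innerSL ℝ (gradR p)) p)
    (hsc : StrongConvexOnSet (Set.univ : Set E) 1 R)
    (y : E) (hy : y ∈ K)
    (hopt : ∀ z ∈ K, ⟪η • g + gradR y - gradR x, y - z⟫ ≤ 0) :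
    ∀ z ∈ K, η * ⟪g, x - z⟫ ≤ breg R gradR z x - breg R gradR z y + η ^ 2 / 2 * ‖g‖ ^ 2 :=
  mirror_descent_old_decision_bound_general K x g η R gradR hR hsc y hopt
end

section
/- (PicCoLO with FTRL.) Let E be a real inner product space and Π ⊆ E a nonempty convex set. Fix N ≥ 1, weights w_1, …, w_N > 0, vectors g_1, …, g_N and ĝ_1, …, ĝ_N in E, and set e_n := g_n − ĝ_n. Let r_1, …, r_N : E → ℝ be convex and differentiable, let M_N ∈ ℝ, let α_1, …, α_N > 0 and set α_0 := 0. Let π̂_1 ∈ Π and, for n = 1, …, N, let π_n, π̂_{n+1} ∈ Π. Define f_n(π) := w_n·⟪g_n, π⟫ + B_{r_n}(π‖π_n). Assume for every n = 1, …, N: (i) π_n minimizes π ↦ w_n·⟪ĝ_n, π⟫ + Σ_{m=1}^{n−1} f_m(π) over Π; (ii) π̂_{n+1} minimizes Σ_{m=1}^{n} f_m over Π; (iii) the function π ↦ Σ_{m=1}^{n} B_{r_m}(π‖π_m) is α_n-strongly convex on Π; and (iv) Σ_{n=1}^N B_{r_n}(π‖π_n) ≤ M_N for all π ∈ Π. Then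 for every π ∈ Π: Σ_{n=1}^N w_n·⟪g_n, π_n − π⟫ ≤ M_N + Σ_{n=1}^N ( (w_n²/(2α_n))·‖e_n‖² − (α_{n−1}/2)·‖π_n − π̂_n‖² ). -/
/-!
Write `Φ n = ∑_{m ≤ n} f_m`. The Correction Step makes `π̂_{n+1}` a minimizer of `Φ n`, and,
since `B_{r_n}(·‖π_n)` is nonnegative and vanishes at `π_n`, the Prediction Step makes `π_n` a
minimizer of the perturbation `Φ n + ⟪w_n (ĝ_n - g_n), ·⟫`. Both functions are `α_n`-strongly
convex, so a minimizer has quadratic growth, and the linear perturbation costs at most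
`w_n² ‖e_n‖² / (2 α_n)`: `Φ n π_n - Φ n π̂_{n+1} ≤ w_n² ‖e_n‖² / (2 α_n)`, while
`Φ (n-1) π̂_n + α_{n-1}/2 ‖π_n - π̂_n‖² ≤ Φ (n-1) π_n`. As `Φ n π_n = Φ (n-1) π_n + w_n ⟪g_n, π_n⟫`,
summing over `n` telescopes, and `Φ N π̂_{N+1} ≤ Φ N π ≤ ∑ w_n ⟪g_n, π⟫ + M_N` finishes.
-/

open scoped RealInnerProductSpace

open Filter Topology

section General

variable {E : Type*} [NormedAddCommGroup E] [InnerProductSpace ℝ E]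

@[simp]
lemma breg_self (R : E → ℝ) (gradR : E → E) (x : E) : breg R gradR x x = 0 := by
  simp [breg]

lemma breg_nonneg {R : E → ℝ} {gradR : E → E} (hR : ConvexOn ℝ Set.univ R)
    (hgrad : ∀ p, HasFDerivAt R (innerSL ℝ (gradR p)) p) (z x : E) :
    0 ≤ breg R gradR z x := by
  set φ : ℝ → ℝ := R ∘ AffineMap.lineMap x z
  have hφ : ConvexOn ℝ Set.univ φ := by
    simpa using hR.comp_affineMap (AffineMap.lineMap x z)
  have hline : HasDerivAt (AffineMap.lineMap x z : ℝ → E) (z - x) 0 := by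
    simpa using AffineMap.hasDerivAt_lineMap (a := x) (b := z) (x := (0 : ℝ))
  have hderiv : HasDerivAt φ ⟪gradR x, z - x⟫ 0 := by
    have hR' : HasFDerivAt R (innerSL ℝ (gradR x)) (AffineMap.lineMap x z (0 : ℝ)) := by
      simpa using hgrad x
    simpa using hR'.comp_hasDerivAt 0 hline
  have hslope := hφ.le_slope_of_hasDerivAt (Set.mem_univ 0) (Set.mem_univ 1) one_pos hderiv
  simp only [slope_def_field, Function.comp_apply, AffineMap.lineMap_apply_one,
    AffineMap.lineMap_apply_zero, sub_zero, div_one, φ] at hslope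
  simp only [breg]
  linarith

lemma real_inner_le_norm_sq_div_add {α : ℝ} (hα : 0 < α) (u d : E) :
    ⟪u, d⟫ ≤ ‖u‖ ^ 2 / (2 * α) + α / 2 * ‖d‖ ^ 2 := by
  have hsq : 0 ≤ (‖u‖ - α * ‖d‖) ^ 2 / (2 * α) := by positivity
  have hexp : (‖u‖ - α * ‖d‖) ^ 2 / (2 * α)
      = ‖u‖ ^ 2 / (2 * α) + α / 2 * ‖d‖ ^ 2 - ‖u‖ * ‖d‖ := by
    field_simp
    ring
  linarith [real_inner_le_norm u d]

namespace StrongConvexOnSet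

variable {K : Set E} {α : ℝ} {F : E → ℝ}

lemma add_inner (hF : StrongConvexOnSet K α F) (v : E) :
    StrongConvexOnSet K α (fun p => F p + ⟪v, p⟫) := by
  intro x hx y hy t ht0 ht1
  have h := hF hx hy ht0 ht1
  simp only [inner_add_right, real_inner_smul_right]
  linarith

lemma add_sq_le_of_isMinOn (hK : Convex ℝ K) (hF : StrongConvexOnSet K α F) {x y : E}
    (hx : x ∈ K) (hmin : IsMinOn F K x) (hy : y ∈ K) :
    F x + α / 2 * ‖y - x‖ ^ 2 ≤ F y := by
  have hbound : ∀ t ∈ Set.Ioo (0 : ℝ) 1, α / 2 * (1 - t) * ‖y - x‖ ^ 2 ≤ F y - F x := by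
    rintro t ⟨ht0, ht1⟩
    have hconv := hF hy hx ht0.le ht1.le
    have hle := isMinOn_iff.mp hmin _ (hK hy hx ht0.le (sub_nonneg.2 ht1.le) (add_sub_cancel t 1))
    have : t * (α / 2 * (1 - t) * ‖y - x‖ ^ 2) ≤ t * (F y - F x) := by linarith
    exact le_of_mul_le_mul_left this ht0
  have hlim : Tendsto (fun t : ℝ => α / 2 * (1 - t) * ‖y - x‖ ^ 2) (𝓝[>] 0)
      (𝓝 (α / 2 * ‖y - x‖ ^ 2)) := by
    refine tendsto_nhdsWithin_of_tendsto_nhds ?_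
    have hcont : Continuous fun t : ℝ => α / 2 * (1 - t) * ‖y - x‖ ^ 2 := by fun_prop
    simpa using hcont.tendsto 0
  have hev : ∀ᶠ t in 𝓝[>] (0 : ℝ), α / 2 * (1 - t) * ‖y - x‖ ^ 2 ≤ F y - F x :=
    Filter.mem_of_superset (Ioo_mem_nhdsGT one_pos) hbound
  linarith [le_of_tendsto hlim hev]

lemma sub_le_of_isMinOn_add_inner (hK : Convex ℝ K) (hF : StrongConvexOnSet K α F)
    (hα : 0 < α) (v : E) {x y : E} (hx : x ∈ K) (hmin : IsMinOn (fun p => F p + ⟪v, p⟫) K x)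
    (hy : y ∈ K) : F x - F y ≤ ‖v‖ ^ 2 / (2 * α) := by
  have hgrowth := (hF.add_inner v).add_sq_le_of_isMinOn hK hx hmin hy
  have hyoung := real_inner_le_norm_sq_div_add hα v (y - x)
  rw [inner_sub_right] at hyoung
  linarith

end StrongConvexOnSet

end General

lemma sum_Icc_le_sub_add_sum_of_le {a b c : ℕ → ℝ} {N : ℕ}
    (h : ∀ n ∈ Finset.Icc 1 N, a n + b n - b (n + 1) ≤ c n) :
    ∑ n ∈ Finset.Icc 1 N, a n ≤ b (N + 1) - b 1 + ∑ n ∈ Finset.Icc 1 N, c n := by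
  induction N with
  | zero => simp
  | succ N ih =>
    rw [Finset.sum_Icc_succ_top (by omega), Finset.sum_Icc_succ_top (by omega)]
    have hlast := h (N + 1) (by simp)
    have hprev := ih fun n hn => h n (Finset.Icc_subset_Icc_right (by omega) hn)
    linarith

section FTRL

variable {E : Type*} [NormedAddCommGroup E] [InnerProductSpace ℝ E]

/-- `∑_{m=1}^{n} f_m(p)`, the objective minimized by the Correction Step. -/
noncomputable def ftrlObjective (w : ℕ → ℝ) (g : ℕ → E) (r : ℕ → E → ℝ) (gradr : ℕ → E → E)
    (π : ℕ → E) (n : ℕ) (p : E) : ℝ :=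
  ∑ m ∈ Finset.Icc 1 n, (w m * ⟪g m, p⟫ + breg (r m) (gradr m) p (π m))

variable {w : ℕ → ℝ} {g : ℕ → E} {r : ℕ → E → ℝ} {gradr : ℕ → E → E} {π : ℕ → E}

local notation "Φ" => ftrlObjective w g r gradr π

@[simp]
lemma ftrlObjective_zero (p : E) : Φ 0 p = 0 := by
  simp [ftrlObjective]

lemma ftrlObjective_of_pos {n : ℕ} (hn : 1 ≤ n) (p : E) :
    Φ n p = Φ (n - 1) p + (w n * ⟪g n, p⟫ + breg (r n) (gradr n) p (π n)) := by
  obtain ⟨k, rfl⟩ := Nat.exists_eq_add_of_le' hn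
  simp only [ftrlObjective, Nat.add_sub_cancel]
  exact Finset.sum_Icc_succ_top (by omega) _

lemma ftrlObjective_eq_add_inner (n : ℕ) (p : E) :
    Φ n p = ∑ m ∈ Finset.Icc 1 n, breg (r m) (gradr m) p (π m)
      + ⟪∑ m ∈ Finset.Icc 1 n, w m • g m, p⟫ := by
  simp only [ftrlObjective, Finset.sum_add_distrib, sum_inner, real_inner_smul_left]
  ring

lemma StrongConvexOnSet.ftrlObjective {K : Set E} {a : ℝ} {n : ℕ}
    (h : StrongConvexOnSet K a fun p => ∑ m ∈ Finset.Icc 1 n, breg (r m) (gradr m) p (π m)) :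
    StrongConvexOnSet K a (Φ n) := by
  have := h.add_inner (∑ m ∈ Finset.Icc 1 n, w m • g m)
  simpa only [← ftrlObjective_eq_add_inner] using this

lemma ftrlObjective_step_le {K : Set E} (hK : Convex ℝ K) {ghat : E} {a b : ℝ} {n : ℕ}
    {x y : E} (hn : 1 ≤ n) (ha : 0 < a) (hB : ∀ p, 0 ≤ breg (r n) (gradr n) p (π n))
    (hπ : π n ∈ K) (hy : y ∈ K) (hsc : StrongConvexOnSet K a (Φ n))
    (hpred : IsMinOn (fun p => w n * ⟪ghat, p⟫ + Φ (n - 1) p) K (π n))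
    (hprev : Φ (n - 1) x + b / 2 * ‖π n - x‖ ^ 2 ≤ Φ (n - 1) (π n)) :
    w n * ⟪g n, π n⟫ + Φ (n - 1) x - Φ n y
      ≤ w n ^ 2 / (2 * a) * ‖g n - ghat‖ ^ 2 - b / 2 * ‖π n - x‖ ^ 2 := by
  -- Up to `breg (r n) (gradr n) · (π n)`, which is nonnegative and vanishes at `π n`,
  -- the Prediction-Step objective is `Φ n + ⟪w n • (ghat - g n), ·⟫`.
  have hmin : IsMinOn (fun p => Φ n p + ⟪w n • (ghat - g n), p⟫) K (π n) := by
    refine isMinOn_iff.mpr fun p hp => ?_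
    have hle := isMinOn_iff.mp hpred p hp
    simp only [ftrlObjective_of_pos hn, breg_self, real_inner_smul_left, inner_sub_left]
    linarith [hB p]
  have hopt := hsc.sub_le_of_isMinOn_add_inner hK ha _ hπ hmin hy
  rw [norm_smul, mul_pow, Real.norm_eq_abs, sq_abs, norm_sub_rev, ftrlObjective_of_pos hn,
    breg_self] at hopt
  rw [div_mul_eq_mul_div]
  linarith

end FTRL

theorem piccolo_ftrl_regret_general
    {E : Type*} [NormedAddCommGroup E] [InnerProductSpace ℝ E]
    (Pset : Set E) (hconv : Convex ℝ Pset)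
    (N : ℕ) (hN : 1 ≤ N)
    (w : ℕ → ℝ)
    (g ghat : ℕ → E)
    (r : ℕ → E → ℝ) (gradr : ℕ → E → E)
    (hrconv : ∀ n, 1 ≤ n → n ≤ N → ConvexOn ℝ (Set.univ : Set E) (r n))
    (hrdiff : ∀ n, 1 ≤ n → n ≤ N → ∀ p : E, HasFDerivAt (r n) (innerSL ℝ (gradr n p)) p)
    (MN : ℝ) (α : ℕ → ℝ) (hα0 : α 0 = 0) (hα : ∀ n, 1 ≤ n → n ≤ N → 0 < α n)
    (πh π : ℕ → E)
    (hπ : ∀ n, 1 ≤ n → n ≤ N → π n ∈ Pset)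
    (hπh : ∀ n, 1 ≤ n → n ≤ N → πh (n + 1) ∈ Pset)
    (hpred : ∀ n, 1 ≤ n → n ≤ N → ∀ q ∈ Pset,
      w n * ⟪ghat n, π n⟫
          + ∑ m ∈ Finset.Icc 1 (n - 1),
              (w m * ⟪g m, π n⟫ + breg (r m) (gradr m) (π n) (π m))
        ≤ w n * ⟪ghat n, q⟫
          + ∑ m ∈ Finset.Icc 1 (n - 1),
              (w m * ⟪g m, q⟫ + breg (r m) (gradr m) q (π m)))
    (hcorr : ∀ n, 1 ≤ n → n ≤ N → ∀ q ∈ Pset,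
      ∑ m ∈ Finset.Icc 1 n,
          (w m * ⟪g m, πh (n + 1)⟫ + breg (r m) (gradr m) (πh (n + 1)) (π m))
        ≤ ∑ m ∈ Finset.Icc 1 n,
            (w m * ⟪g m, q⟫ + breg (r m) (gradr m) q (π m)))
    (hsc : ∀ n, 1 ≤ n → n ≤ N →
      StrongConvexOnSet Pset (α n)
        (fun q => ∑ m ∈ Finset.Icc 1 n, breg (r m) (gradr m) q (π m)))
    (hreg : ∀ q ∈ Pset, ∑ n ∈ Finset.Icc 1 N, breg (r n) (gradr n) q (π n) ≤ MN) :
    ∀ q ∈ Pset,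
      ∑ n ∈ Finset.Icc 1 N, w n * ⟪g n, π n - q⟫
        ≤ MN + ∑ n ∈ Finset.Icc 1 N,
            ((w n) ^ 2 / (2 * α n) * ‖g n - ghat n‖ ^ 2
              - α (n - 1) / 2 * ‖π n - πh n‖ ^ 2) := by
  intro q hq
  set Φ := ftrlObjective w g r gradr π
  have hgrowth : ∀ n ≤ N, ∀ y ∈ Pset,
      Φ n (πh (n + 1)) + α n / 2 * ‖y - πh (n + 1)‖ ^ 2 ≤ Φ n y := by
    rintro (_ | n) hn y hy
    · simp [Φ, hα0]
    · exact (hsc _ (by omega) hn).ftrlObjective.add_sq_le_of_isMinOn hconv (hπh _ (by omega) hn)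
        (isMinOn_iff.mpr (hcorr _ (by omega) hn)) hy
  have hstep : ∀ n ∈ Finset.Icc 1 N,
      w n * ⟪g n, π n⟫ + Φ (n - 1) (πh n) - Φ n (πh (n + 1))
        ≤ (w n) ^ 2 / (2 * α n) * ‖g n - ghat n‖ ^ 2 - α (n - 1) / 2 * ‖π n - πh n‖ ^ 2 := by
    intro n hn
    obtain ⟨h1, h2⟩ := Finset.mem_Icc.mp hn
    have hprev := hgrowth (n - 1) (by omega) (π n) (hπ n h1 h2)
    rw [Nat.sub_add_cancel h1] at hprev
    exact ftrlObjective_step_le hconv h1 (hα n h1 h2)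
      (fun p => breg_nonneg (hrconv n h1 h2) (hrdiff n h1 h2) p (π n)) (hπ n h1 h2)
      (hπh n h1 h2) (hsc n h1 h2).ftrlObjective (isMinOn_iff.mpr (hpred n h1 h2)) hprev
  have hsum := sum_Icc_le_sub_add_sum_of_le (b := fun n => Φ (n - 1) (πh n)) hstep
  have hfinal : Φ N (πh (N + 1)) ≤ Φ N q := hcorr N hN le_rfl q hq
  simp only [Nat.add_sub_cancel, Nat.sub_self, Φ, ftrlObjective_zero, sub_zero] at hsum
  have hsplit : Φ N q = ∑ n ∈ Finset.Icc 1 N, w n * ⟪g n, q⟫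
      + ∑ n ∈ Finset.Icc 1 N, breg (r n) (gradr n) q (π n) := Finset.sum_add_distrib
  have hregret : ∑ n ∈ Finset.Icc 1 N, w n * ⟪g n, π n - q⟫
      = ∑ n ∈ Finset.Icc 1 N, w n * ⟪g n, π n⟫ - ∑ n ∈ Finset.Icc 1 N, w n * ⟪g n, q⟫ := by
    simp only [inner_sub_right, mul_sub, Finset.sum_sub_distrib]
  linarith [hreg q hq]

/-- Regret bound of PicCoLO with an FTRL base algorithm (Proposition 2).
`f_n(q) = w_n⟪g_n, q⟫ + B_{r_n}(q‖π_n)` is written inline;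
`π n` is the Prediction-Step decision and `πh (n+1)` the Correction-Step one. -/
theorem piccolo_ftrl_regret
    {E : Type*} [NormedAddCommGroup E] [InnerProductSpace ℝ E]
    (Pset : Set E) (hne : Pset.Nonempty) (hconv : Convex ℝ Pset)
    (N : ℕ) (hN : 1 ≤ N)
    (w : ℕ → ℝ) (hw : ∀ n, 1 ≤ n → n ≤ N → 0 < w n)
    (g ghat : ℕ → E)
    (r : ℕ → E → ℝ) (gradr : ℕ → E → E)
    (hrconv : ∀ n, 1 ≤ n → n ≤ N → ConvexOn ℝ (Set.univ : Set E) (r n))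
    (hrdiff : ∀ n, 1 ≤ n → n ≤ N → ∀ p : E, HasFDerivAt (r n) (innerSL ℝ (gradr n p)) p)
    (MN : ℝ) (α : ℕ → ℝ) (hα0 : α 0 = 0) (hα : ∀ n, 1 ≤ n → n ≤ N → 0 < α n)
    (πh π : ℕ → E)
    (hπh1 : πh 1 ∈ Pset)
    (hπ : ∀ n, 1 ≤ n → n ≤ N → π n ∈ Pset)
    (hπh : ∀ n, 1 ≤ n → n ≤ N → πh (n + 1) ∈ Pset)
    (hpred : ∀ n, 1 ≤ n → n ≤ N → ∀ q ∈ Pset,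
      w n * ⟪ghat n, π n⟫
          + ∑ m ∈ Finset.Icc 1 (n - 1),
              (w m * ⟪g m, π n⟫ + breg (r m) (gradr m) (π n) (π m))
        ≤ w n * ⟪ghat n, q⟫
          + ∑ m ∈ Finset.Icc 1 (n - 1),
              (w m * ⟪g m, q⟫ + breg (r m) (gradr m) q (π m)))
    (hcorr : ∀ n, 1 ≤ n → n ≤ N → ∀ q ∈ Pset,
      ∑ m ∈ Finset.Icc 1 n,
          (w m * ⟪g m, πh (n + 1)⟫ + breg (r m) (gradr m) (πh (n + 1)) (π m))
        ≤ ∑ m ∈ Finset.Icc 1 n,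
            (w m * ⟪g m, q⟫ + breg (r m) (gradr m) q (π m)))
    (hsc : ∀ n, 1 ≤ n → n ≤ N →
      StrongConvexOnSet Pset (α n)
        (fun q => ∑ m ∈ Finset.Icc 1 n, breg (r m) (gradr m) q (π m)))
    (hreg : ∀ q ∈ Pset, ∑ n ∈ Finset.Icc 1 N, breg (r n) (gradr n) q (π n) ≤ MN) :
    ∀ q ∈ Pset,
      ∑ n ∈ Finset.Icc 1 N, w n * ⟪g n, π n - q⟫
        ≤ MN + ∑ n ∈ Finset.Icc 1 N,
            ((w n) ^ 2 / (2 * α n) * ‖g n - ghat n‖ ^ 2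
              - α (n - 1) / 2 * ‖π n - πh n‖ ^ 2) :=
  piccolo_ftrl_regret_general Pset hconv N hN w g ghat r gradr hrconv hrdiff MN α hα0 hα πh π hπ hπh
    hpred hcorr hsc hreg
end

section
/- (Stronger FTL Lemma.) Let Π be a nonempty set, N ≥ 1, and let l_1, …, l_N : Π → ℝ. Let π_1, …, π_N ∈ Π be arbitrary, and for each n let π_n^⋆ ∈ Π satisfy l_{1:n}(π_n^⋆) ≤ l_{1:n}(π) for all π ∈ Π. Define Δ_1 := 0 and, for n ≥ 2, Δ_n := l_{1:n−1}(π_n) − l_{1:n−1}(π_{n−1}^⋆). Then Δ_n ≥ 0 for every n, and the exact identity holds: Σ_{n=1}^N l_n(π_n) − l_{1:N}(π_N^⋆) = Σ_{n=1}^N ( l_{1:n}(π_n) − l_{1:n}(π_n^⋆) − Δ_n ). -/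
/-!
Write `L n q = l_{1:n}(q)`, so that `L n q - L (n-1) q = l_n(q)` and `L 0 = 0`. Then the summand
`L n (π n) - L n (π⋆ n) - Δ n` equals `l_n(π_n) - (L n (π⋆ n) - L (n-1) (π⋆ (n-1)))`, and the
second part telescopes to `L N (π⋆ N)`. The sign of `Δ n` is the optimality of `π⋆ (n-1)` for
`L (n-1)`.
-/

open Finset

theorem Finset.sum_Icc_one_sub_pred {M : Type*} [AddCommGroup M] (f : ℕ → M) (N : ℕ) :
    ∑ n ∈ Icc 1 N, (f n - f (n - 1)) = f N - f 0 := by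
  induction N with
  | zero => simp
  | succ N ih =>
    rw [sum_Icc_succ_top (by omega), ih, Nat.add_sub_cancel]
    abel

section CumulativeLoss

variable {P : Type*}

def cumulativeLoss (l : ℕ → P → ℝ) (n : ℕ) (q : P) : ℝ :=
  ∑ m ∈ Icc 1 n, l m q

variable (l : ℕ → P → ℝ)

@[simp]
theorem cumulativeLoss_zero (q : P) : cumulativeLoss l 0 q = 0 := by
  simp [cumulativeLoss]

theorem cumulativeLoss_sub_pred {n : ℕ} (hn : 1 ≤ n) (q : P) :
    cumulativeLoss l n q - cumulativeLoss l (n - 1) q = l n q := by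
  obtain ⟨k, rfl⟩ := Nat.exists_eq_add_of_le' hn
  rw [cumulativeLoss, sum_Icc_succ_top (by omega), Nat.add_sub_cancel, cumulativeLoss]
  ring

theorem sum_sub_cumulativeLoss_eq_sum (π πstar : ℕ → P) (N : ℕ) :
    ∑ n ∈ Icc 1 N, l n (π n) - cumulativeLoss l N (πstar N)
      = ∑ n ∈ Icc 1 N, (cumulativeLoss l n (π n) - cumulativeLoss l n (πstar n)
          - (cumulativeLoss l (n - 1) (π n) - cumulativeLoss l (n - 1) (πstar (n - 1)))) := by
  set F : ℕ → ℝ := fun n ↦ cumulativeLoss l n (πstar n)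
  have hsummand : ∀ n ∈ Icc 1 N,
      cumulativeLoss l n (π n) - F n - (cumulativeLoss l (n - 1) (π n) - F (n - 1))
        = l n (π n) - (F n - F (n - 1)) := by
    intro n hn
    rw [← cumulativeLoss_sub_pred l (mem_Icc.1 hn).1]
    ring
  rw [sum_congr rfl hsummand, sum_sub_distrib, sum_Icc_one_sub_pred]
  simp [F]

end CumulativeLoss

theorem stronger_ftl_lemma_general {P : Type*} (N : ℕ)
    (l : ℕ → P → ℝ) (π πstar : ℕ → P)
    (hstar : ∀ n, 1 ≤ n → n ≤ N → ∀ q : P,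
      ∑ m ∈ Finset.Icc 1 n, l m (πstar n) ≤ ∑ m ∈ Finset.Icc 1 n, l m q)
    (Δ : ℕ → ℝ) (hΔ1 : Δ 1 = 0)
    (hΔ : ∀ n, 2 ≤ n → n ≤ N →
      Δ n = (∑ m ∈ Finset.Icc 1 (n - 1), l m (π n))
              - ∑ m ∈ Finset.Icc 1 (n - 1), l m (πstar (n - 1))) :
    (∀ n, 1 ≤ n → n ≤ N → 0 ≤ Δ n) ∧
      (∑ n ∈ Finset.Icc 1 N, l n (π n)) - ∑ m ∈ Finset.Icc 1 N, l m (πstar N)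
        = ∑ n ∈ Finset.Icc 1 N,
            ((∑ m ∈ Finset.Icc 1 n, l m (π n))
              - (∑ m ∈ Finset.Icc 1 n, l m (πstar n)) - Δ n) := by
  have hΔeq : ∀ n, 1 ≤ n → n ≤ N →
      Δ n = cumulativeLoss l (n - 1) (π n) - cumulativeLoss l (n - 1) (πstar (n - 1)) := by
    intro n hn hnN
    rcases hn.eq_or_lt with rfl | hn
    · simp [hΔ1]
    · exact hΔ n hn hnN
  refine ⟨fun n hn hnN ↦ ?_, ?_⟩
  · rcases hn.eq_or_lt with rfl | hn
    · simp [hΔ1]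
    · rw [hΔeq n hn.le hnN, sub_nonneg]
      exact hstar (n - 1) (by omega) (by omega) (π n)
  · refine (sum_sub_cumulativeLoss_eq_sum l π πstar N).trans (sum_congr rfl fun n hn ↦ ?_)
    obtain ⟨hn, hnN⟩ := mem_Icc.1 hn
    rw [hΔeq n hn hnN]
    rfl

/-- Stronger FTL Lemma: with `Δ_1 = 0` and
`Δ_n = l_{1:n−1}(π_n) − l_{1:n−1}(π_{n−1}^⋆)` for `n ≥ 2`, each `Δ_n` is
nonnegative and the regret equals
`∑_{n=1}^N (l_{1:n}(π_n) − l_{1:n}(π_n^⋆) − Δ_n)` exactly. -/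
theorem stronger_ftl_lemma {P : Type*} [Nonempty P] (N : ℕ) (hN : 1 ≤ N)
    (l : ℕ → P → ℝ) (π πstar : ℕ → P)
    (hstar : ∀ n, 1 ≤ n → n ≤ N → ∀ q : P,
      ∑ m ∈ Finset.Icc 1 n, l m (πstar n) ≤ ∑ m ∈ Finset.Icc 1 n, l m q)
    (Δ : ℕ → ℝ) (hΔ1 : Δ 1 = 0)
    (hΔ : ∀ n, 2 ≤ n → n ≤ N →
      Δ n = (∑ m ∈ Finset.Icc 1 (n - 1), l m (π n))
              - ∑ m ∈ Finset.Icc 1 (n - 1), l m (πstar (n - 1))) :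
    (∀ n, 1 ≤ n → n ≤ N → 0 ≤ Δ n) ∧
      (∑ n ∈ Finset.Icc 1 N, l n (π n)) - ∑ m ∈ Finset.Icc 1 N, l m (πstar N)
        = ∑ n ∈ Finset.Icc 1 N,
            ((∑ m ∈ Finset.Icc 1 n, l m (π n))
              - (∑ m ∈ Finset.Icc 1 n, l m (πstar n)) - Δ n) :=
  stronger_ftl_lemma_general N l π πstar hstar Δ hΔ1 hΔ
end

section
/- (Reduction of imitation learning to online learning; deterministic form of Lemma 2.) Let Π be a nonempty set, N ≥ 1, let l_1, …, l_N : Π → ℝ, let π_1, …, π_N ∈ Π, let w_1, …, w_N > 0, and let J_1, …, J_N, J⋆ ∈ ℝ and C ≥ 0 satisfy J_n − J⋆ ≤ C·l_n(π_n) for every n. Let π^⋆ ∈ Π satisfy Σ_{n=1}^N w_n·l_n(π^⋆) ≤ Σ_{n=1}^N w_n·l_n(π) for all π ∈ Π, and define Regret_N := Σ_{n=1}^N w_n·l_n(π_n) − Σ_{n=1}^N w_n·l_n(π^⋆) and ε_N := (1/w_{1:N})·Σ_{n=1}^N w_n·l_n(π^⋆). Then Σ_{n=1}^N (w_n/w_{1:N})·J_n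 ≤ J⋆ + C·( ε_N + Regret_N/w_{1:N} ). -/
/-! Averaging the per-round bound `J_n ≤ J⋆ + C·l_n(π_n)` with the weights `w_n / w_{1:N}`
bounds the average performance by `J⋆ + C` times the average online loss of the learner, and
that average loss is exactly `ε_N + Regret_N / w_{1:N}`: the comparator terms cancel. -/

open Finset

section WeightedAverage

variable {ι : Type*} {s : Finset ι} {w a x : ι → ℝ} {b c : ℝ}

theorem sum_mul_le_sum_mul_add_mul_sum (hw : ∀ i ∈ s, 0 ≤ w i)
    (h : ∀ i ∈ s, a i ≤ b + c * x i) :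
    ∑ i ∈ s, w i * a i ≤ (∑ i ∈ s, w i) * b + c * ∑ i ∈ s, w i * x i := by
  rw [sum_mul, mul_sum, ← sum_add_distrib]
  refine sum_le_sum fun i hi => ?_
  calc w i * a i ≤ w i * (b + c * x i) := mul_le_mul_of_nonneg_left (h i hi) (hw i hi)
    _ = w i * b + c * (w i * x i) := by ring

theorem weighted_average_le (hw : ∀ i ∈ s, 0 ≤ w i) (hW : 0 < ∑ i ∈ s, w i)
    (h : ∀ i ∈ s, a i ≤ b + c * x i) :
    ∑ i ∈ s, w i / (∑ j ∈ s, w j) * a i ≤ b + c * ((∑ i ∈ s, w i * x i) / ∑ i ∈ s, w i) := by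
  simp_rw [div_mul_eq_mul_div, ← sum_div]
  rw [div_le_iff₀ hW]
  calc ∑ i ∈ s, w i * a i ≤ (∑ i ∈ s, w i) * b + c * ∑ i ∈ s, w i * x i :=
        sum_mul_le_sum_mul_add_mul_sum hw h
    _ = (b + c * ((∑ i ∈ s, w i * x i) / ∑ i ∈ s, w i)) * ∑ i ∈ s, w i := by
        field_simp

end WeightedAverage

theorem il_reduction_to_online_learning_general
    {P : Type*} (N : ℕ) (hN : 1 ≤ N)
    (l : ℕ → P → ℝ) (π : ℕ → P)
    (w : ℕ → ℝ) (hw : ∀ n, 1 ≤ n → n ≤ N → 0 < w n)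
    (J : ℕ → ℝ) (Jstar C : ℝ)
    (hJ : ∀ n, 1 ≤ n → n ≤ N → J n - Jstar ≤ C * l n (π n))
    (πstar : P)
    (W Reg ε : ℝ)
    (hW : W = ∑ n ∈ Finset.Icc 1 N, w n)
    (hReg : Reg = (∑ n ∈ Finset.Icc 1 N, w n * l n (π n))
                    - ∑ n ∈ Finset.Icc 1 N, w n * l n πstar)
    (hε : ε = (1 / W) * ∑ n ∈ Finset.Icc 1 N, w n * l n πstar) :
    ∑ n ∈ Finset.Icc 1 N, (w n / W) * J n ≤ Jstar + C * (ε + Reg / W) := by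
  have hw' : ∀ n ∈ Icc 1 N, 0 < w n := fun n hn => hw n (mem_Icc.1 hn).1 (mem_Icc.1 hn).2
  have hWpos : 0 < ∑ n ∈ Icc 1 N, w n := sum_pos hw' ⟨1, mem_Icc.2 ⟨le_rfl, hN⟩⟩
  have hloss : ε + Reg / W = (∑ n ∈ Icc 1 N, w n * l n (π n)) / W := by
    rw [hε, hReg]
    ring
  rw [hloss, hW]
  refine weighted_average_le (fun n hn => (hw' n hn).le) hWpos fun n hn => ?_
  linarith [hJ n (mem_Icc.1 hn).1 (mem_Icc.1 hn).2]

/-- Reduction of imitation learning to online learning (deterministic form of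
Lemma 2): if `J_n − J⋆ ≤ C·l_n(π_n)` for every round, then the weighted
average performance is bounded by
`J⋆ + C(ε_N + Regret_N / w_{1:N})`. -/
theorem il_reduction_to_online_learning
    {P : Type*} [Nonempty P] (N : ℕ) (hN : 1 ≤ N)
    (l : ℕ → P → ℝ) (π : ℕ → P)
    (w : ℕ → ℝ) (hw : ∀ n, 1 ≤ n → n ≤ N → 0 < w n)
    (J : ℕ → ℝ) (Jstar C : ℝ) (hC : 0 ≤ C)
    (hJ : ∀ n, 1 ≤ n → n ≤ N → J n - Jstar ≤ C * l n (π n))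
    (πstar : P)
    (hstar : ∀ q : P,
      ∑ n ∈ Finset.Icc 1 N, w n * l n πstar ≤ ∑ n ∈ Finset.Icc 1 N, w n * l n q)
    (W Reg ε : ℝ)
    (hW : W = ∑ n ∈ Finset.Icc 1 N, w n)
    (hReg : Reg = (∑ n ∈ Finset.Icc 1 N, w n * l n (π n))
                    - ∑ n ∈ Finset.Icc 1 N, w n * l n πstar)
    (hε : ε = (1 / W) * ∑ n ∈ Finset.Icc 1 N, w n * l n πstar) :
    ∑ n ∈ Finset.Icc 1 N, (w n / W) * J n ≤ Jstar + C * (ε + Reg / W) :=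
  il_reduction_to_online_learning_general N hN l π w hw J Jstar C hJ πstar W Reg ε hW hReg hε
end

section
/- (Weighted telescoping inequality underlying Lemma 3.) Let N ≥ 1 and let w_1, …, w_N be positive reals with w_1 = 1 satisfying the ratio condition w_{n+k}·w_m ≤ w_{m+k}·w_n for all indices with 1 ≤ m ≤ n and n + k ≤ N. Let a_0, a_1, …, a_N and b_1, …, b_N be reals with a_n = a_{n−1} + b_n for every n, and assume b_n ≥ 0 for every n with 2 ≤ n ≤ N. Then Σ_{n=1}^N w_n·a_n ≤ w_{1:N}·a_0 + Σ_{k=1}^N w_{N−k+1}·( Σ_{n=1}^k w_n·b_n ). -/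
/-!
Unrolling the recursion, `a_n = a_0 + ∑_{j ≤ n} b_j`, so after exchanging the order of summation
both sides are sums over `j` of `b_j` times a block of weights: `∑_{n=j}^N w_n` on the left and
`w_j ∑_{i=1}^{N-j+1} w_i` on the right. For `j = 1` the two blocks agree because `w_1 = 1`. For
`j ≥ 2` the ratio condition with `m = 1` gives the submultiplicativity `w_{j+i-1} ≤ w_j w_i`,
so the left block is termwise dominated, and `b_j ≥ 0` preserves the inequality.
-/

open Finset

theorem eq_add_sum_Icc_of_eq_add {M : Type*} [AddCommMonoid M] {N : ℕ} {a b : ℕ → M}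
    (hab : ∀ n, 1 ≤ n → n ≤ N → a n = a (n - 1) + b n) :
    ∀ n ≤ N, a n = a 0 + ∑ j ∈ Icc 1 n, b j
  | 0, _ => by simp
  | n + 1, hn => by
    rw [sum_Icc_succ_top (by omega), hab (n + 1) (by omega) hn, Nat.add_sub_cancel,
      eq_add_sum_Icc_of_eq_add hab n (by omega), add_assoc]

theorem sum_Icc_sum_Icc_comm {M : Type*} [AddCommMonoid M] (a N : ℕ) (f : ℕ → ℕ → M) :
    ∑ n ∈ Icc a N, ∑ j ∈ Icc a n, f n j = ∑ j ∈ Icc a N, ∑ n ∈ Icc j N, f n j :=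
  sum_comm' fun n j => by simp only [mem_Icc]; omega

theorem sum_Icc_reflect {M : Type*} [AddCommMonoid M] (f : ℕ → M) (j N : ℕ) :
    ∑ k ∈ Icc j N, f (N - k + j) = ∑ k ∈ Icc j N, f k :=
  sum_nbij' (fun k => N - k + j) (fun k => N - k + j)
    (fun k hk => by simp only [mem_Icc] at hk ⊢; omega)
    (fun k hk => by simp only [mem_Icc] at hk ⊢; omega)
    (fun k hk => by simp only [mem_Icc] at hk; omega)
    (fun k hk => by simp only [mem_Icc] at hk; omega)
    (fun _ _ => rfl)

section WeightRatio

variable {N : ℕ} {w : ℕ → ℝ}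

theorem le_mul_of_weight_ratio (hw1 : w 1 = 1)
    (hratio : ∀ m n k : ℕ, 1 ≤ m → m ≤ n → n + k ≤ N → w (n + k) * w m ≤ w (m + k) * w n)
    {j n : ℕ} (hj : 1 ≤ j) (hjn : j ≤ n) (hn : n ≤ N) :
    w n ≤ w (n - j + 1) * w j := by
  have h := hratio 1 j (n - j) le_rfl hj (by omega)
  rwa [hw1, mul_one, Nat.add_sub_cancel' hjn, add_comm 1] at h

theorem sum_Icc_le_mul_sum_Icc_reflect (hw1 : w 1 = 1)
    (hratio : ∀ m n k : ℕ, 1 ≤ m → m ≤ n → n + k ≤ N → w (n + k) * w m ≤ w (m + k) * w n)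
    {j : ℕ} (hj : 1 ≤ j) :
    ∑ n ∈ Icc j N, w n ≤ w j * ∑ k ∈ Icc j N, w (N - k + 1) := by
  have hreflect : ∑ k ∈ Icc j N, w (N - k + 1) = ∑ n ∈ Icc j N, w (n - j + 1) := by
    simpa only [Nat.add_sub_cancel] using sum_Icc_reflect (fun n => w (n - j + 1)) j N
  rw [hreflect, mul_sum]
  refine sum_le_sum fun n hn => ?_
  rw [mem_Icc] at hn
  rw [mul_comm (w j)]
  exact le_mul_of_weight_ratio hw1 hratio hj hn.1 hn.2

end WeightRatio

theorem weighted_telescoping_inequality_general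
    (N : ℕ) (w : ℕ → ℝ)
    (hw1 : w 1 = 1)
    (hratio : ∀ m n k : ℕ, 1 ≤ m → m ≤ n → n + k ≤ N →
      w (n + k) * w m ≤ w (m + k) * w n)
    (a b : ℕ → ℝ)
    (hab : ∀ n, 1 ≤ n → n ≤ N → a n = a (n - 1) + b n)
    (hb : ∀ n, 2 ≤ n → n ≤ N → 0 ≤ b n) :
    ∑ n ∈ Finset.Icc 1 N, w n * a n
      ≤ (∑ m ∈ Finset.Icc 1 N, w m) * a 0
        + ∑ k ∈ Finset.Icc 1 N, w (N - k + 1) * (∑ n ∈ Finset.Icc 1 k, w n * b n) := by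
  have hblock : ∀ j ∈ Icc 1 N,
      (∑ n ∈ Icc j N, w n) * b j ≤ (∑ k ∈ Icc j N, w (N - k + 1)) * (w j * b j) := by
    intro j hj
    rw [mem_Icc] at hj
    obtain rfl | hj2 := hj.1.eq_or_lt
    · rw [sum_Icc_reflect w 1 N, hw1, one_mul]
    · rw [← mul_assoc, mul_comm _ (w j)]
      exact mul_le_mul_of_nonneg_right (sum_Icc_le_mul_sum_Icc_reflect hw1 hratio hj.1)
        (hb j hj2 hj.2)
  calc ∑ n ∈ Icc 1 N, w n * a n
      = (∑ m ∈ Icc 1 N, w m) * a 0 + ∑ j ∈ Icc 1 N, (∑ n ∈ Icc j N, w n) * b j := by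
        rw [sum_congr rfl fun n hn => by rw [eq_add_sum_Icc_of_eq_add hab n (mem_Icc.1 hn).2]]
        simp_rw [mul_add, mul_sum, sum_add_distrib, sum_mul]
        rw [sum_Icc_sum_Icc_comm]
    _ ≤ (∑ m ∈ Icc 1 N, w m) * a 0
          + ∑ j ∈ Icc 1 N, (∑ k ∈ Icc j N, w (N - k + 1)) * (w j * b j) :=
        add_le_add_right (sum_le_sum hblock) _
    _ = _ := by
        simp_rw [mul_sum, sum_mul]
        rw [sum_Icc_sum_Icc_comm]

/-- Weighted telescoping inequality underlying Lemma 3: with weights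
satisfying `w_1 = 1` and the ratio condition
`w_{n+k}·w_m ≤ w_{m+k}·w_n` (`1 ≤ m ≤ n`, `n + k ≤ N`), and
`a_n = a_{n−1} + b_n` with `b_n ≥ 0` for `2 ≤ n ≤ N`, one has
`∑ w_n a_n ≤ w_{1:N} a_0 + ∑_k w_{N−k+1} (∑_{n≤k} w_n b_n)`. -/
theorem weighted_telescoping_inequality
    (N : ℕ) (hN : 1 ≤ N) (w : ℕ → ℝ)
    (hwpos : ∀ n, 1 ≤ n → n ≤ N → 0 < w n) (hw1 : w 1 = 1)
    (hratio : ∀ m n k : ℕ, 1 ≤ m → m ≤ n → n + k ≤ N →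
      w (n + k) * w m ≤ w (m + k) * w n)
    (a b : ℕ → ℝ)
    (hab : ∀ n, 1 ≤ n → n ≤ N → a n = a (n - 1) + b n)
    (hb : ∀ n, 2 ≤ n → n ≤ N → 0 ≤ b n) :
    ∑ n ∈ Finset.Icc 1 N, w n * a n
      ≤ (∑ m ∈ Finset.Icc 1 N, w m) * a 0
        + ∑ k ∈ Finset.Icc 1 N, w (N - k + 1) * (∑ n ∈ Finset.Icc 1 k, w n * b n) :=
  weighted_telescoping_inequality_general N w hw1 hratio a b hab hb
end

section
/- (PicCoLO with mirror descent generalizes optimistic mirror descent.) Let E be a real inner product space and R : E → ℝ differentiable with gradient ∇R. Let g, ĝ ∈ E and let π̂, π₊ ∈ E satisfy ∇R(π₊) = ∇R(π̂) − ĝ (the unconstrained Prediction-Step optimality condition for π₊ = argmin_{π∈E} ⟪ĝ, π⟫ + B_R(π‖π̂)). Then there exists a constant c ∈ ℝ such that for every π ∈ E: ⟪g − ĝ, π⟫ + B_R(π‖π₊) = ⟪g, π⟫ + B_R(π‖π̂) + c. Consequently, over any set Π ⊆ E the Correction-Step objective π ↦ ⟪g − ĝ, π⟫ + B_R(π‖π₊)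 and the optimistic-mirror-descent objective π ↦ ⟪g, π⟫ + B_R(π‖π̂) have the same minimizers. -/
open scoped RealInnerProductSpace

theorem breg_eq_add_inner_add_const_of_grad_eq_sub {E : Type*} [NormedAddCommGroup E]
    [InnerProductSpace ℝ E] {R : E → ℝ} {gradR : E → E} {x y v : E}
    (hy : gradR y = gradR x - v) (z : E) :
    breg R gradR z y = breg R gradR z x + ⟪v, z⟫ + (R x - R y + ⟪gradR x, y - x⟫ - ⟪v, y⟫) := by
  simp only [breg, hy, inner_sub_left, inner_sub_right]
  ring

theorem forall_le_iff_of_eq_add_const {α β : Type*} [AddCommGroup β] [PartialOrder β]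
    [IsOrderedAddMonoid β] {f g : α → β} {c : β} (h : ∀ x, f x = g x + c) (s : Set α) (y : α) :
    (∀ z ∈ s, f y ≤ f z) ↔ ∀ z ∈ s, g y ≤ g z := by
  simp only [h, add_le_add_iff_right]

theorem piccolo_generalizes_optimistic_mirror_descent_general
    {E : Type*} [NormedAddCommGroup E] [InnerProductSpace ℝ E]
    (R : E → ℝ) (gradR : E → E)
    (g ghat πh πp : E) (hstep : gradR πp = gradR πh - ghat) :
    ∃ c : ℝ,
      (∀ π : E, ⟪g - ghat, π⟫ + breg R gradR π πp = ⟪g, π⟫ + breg R gradR π πh + c) ∧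
      ∀ (Pset : Set E) (y : E), y ∈ Pset →
        ((∀ z ∈ Pset, ⟪g - ghat, y⟫ + breg R gradR y πp ≤ ⟪g - ghat, z⟫ + breg R gradR z πp)
          ↔ (∀ z ∈ Pset, ⟪g, y⟫ + breg R gradR y πh ≤ ⟪g, z⟫ + breg R gradR z πh)) := by
  set c := R πh - R πp + ⟪gradR πh, πp - πh⟫ - ⟪ghat, πp⟫
  have hshift (π : E) :
      ⟪g - ghat, π⟫ + breg R gradR π πp = ⟪g, π⟫ + breg R gradR π πh + c := by
    rw [breg_eq_add_inner_add_const_of_grad_eq_sub hstep, inner_sub_left]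
    ring
  exact ⟨c, hshift, fun Pset y _ => forall_le_iff_of_eq_add_const hshift Pset y⟩

/-- PicCoLO with mirror descent generalizes optimistic mirror descent:
if `∇R(π₊) = ∇R(π̂) − ĝ` (the unconstrained Prediction-Step optimality
condition), then the Correction-Step objective
`π ↦ ⟪g − ĝ, π⟫ + B_R(π‖π₊)` and the optimistic-mirror-descent objective
`π ↦ ⟪g, π⟫ + B_R(π‖π̂)` differ by a constant, and hence have the same
minimizers over any set `Π`. -/
theorem piccolo_generalizes_optimistic_mirror_descent
    {E : Type*} [NormedAddCommGroup E] [InnerProductSpace ℝ E]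
    (R : E → ℝ) (gradR : E → E)
    (hR : ∀ p : E, HasFDerivAt R (innerSL ℝ (gradR p)) p)
    (g ghat πh πp : E) (hstep : gradR πp = gradR πh - ghat) :
    ∃ c : ℝ,
      (∀ π : E, ⟪g - ghat, π⟫ + breg R gradR π πp = ⟪g, π⟫ + breg R gradR π πh + c) ∧
      ∀ (Pset : Set E) (y : E), y ∈ Pset →
        ((∀ z ∈ Pset, ⟪g - ghat, y⟫ + breg R gradR y πp ≤ ⟪g - ghat, z⟫ + breg R gradR z πp)
          ↔ (∀ z ∈ Pset, ⟪g, y⟫ + breg R gradR y πh ≤ ⟪g, z⟫ + breg R gradR z πh)) :=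
  piccolo_generalizes_optimistic_mirror_descent_general R gradR g ghat πh πp hstep
end

section
/- (Expected gradient-prediction-error bound; analogue of Lemma 4.3 of Cheng et al.) Let (Ω, μ) be a probability space, E a real Banach space, and F a real normed space (the policy parameter space). Let g : Ω → E and ĝ : Ω → E be strongly measurable with ∫‖g‖² dμ < ∞ and ∫‖ĝ‖² dμ < ∞, and let Φ : F → Ω → E be such that Φ(π') is Bochner integrable for every π' ∈ F. Let π, π̂ ∈ F and L, σ_g, σ_ĝ ≥ 0, and assume: (i) ∫‖g − ∫g dμ‖² dμ ≤ σ_g²; (ii) ∫‖ĝ − ∫ĝ dμ‖² dμ ≤ σ_ĝ²; (iii) ∫ĝ dμ = ∫Φ(π̂) dμ; and (iv) ‖∫Φ(π') dμ − ∫Φ(π'') dμ‖ ≤ L·‖π' − π''‖ for all π', π'' ∈ F. Then ∫‖g − ĝ‖² dμ ≤ 4·( σ_g² + σ_ĝ² + L²·‖π − π̂‖² + ‖∫g dμ − ∫Φ(π) dμ‖² ). -/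
/-!
Route `g - ĝ` through the three means `∫ g`, `∫ Φ(π)` and `∫ ĝ = ∫ Φ(π̂)`. The four increments are
the sampling deviation of `g`, the model bias at `π`, the drift of the model mean from `π̂` to `π`
(controlled by the Lipschitz bound), and the sampling deviation of `ĝ`; the square of a sum of
four vectors is at most four times the sum of their squares, and integrating gives the bound.
-/

open MeasureTheory

theorem norm_add_sq_le {E : Type*} [SeminormedAddCommGroup E] (a b : E) :
    ‖a + b‖ ^ 2 ≤ 2 * (‖a‖ ^ 2 + ‖b‖ ^ 2) :=
  (pow_le_pow_left₀ (norm_nonneg _) (norm_add_le a b) 2).trans add_sq_le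

theorem norm_sub_sq_le_four_mul {E : Type*} [SeminormedAddCommGroup E] (x₀ x₁ x₂ x₃ x₄ : E) :
    ‖x₀ - x₄‖ ^ 2 ≤
      4 * (‖x₀ - x₁‖ ^ 2 + ‖x₁ - x₂‖ ^ 2 + ‖x₂ - x₃‖ ^ 2 + ‖x₃ - x₄‖ ^ 2) :=
  calc ‖x₀ - x₄‖ ^ 2 = ‖(x₀ - x₁ + (x₁ - x₂)) + (x₂ - x₃ + (x₃ - x₄))‖ ^ 2 := by
        simp only [sub_add_sub_cancel]
    _ ≤ 2 * (‖x₀ - x₁ + (x₁ - x₂)‖ ^ 2 + ‖x₂ - x₃ + (x₃ - x₄)‖ ^ 2) := norm_add_sq_le _ _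
    _ ≤ 2 * (2 * (‖x₀ - x₁‖ ^ 2 + ‖x₁ - x₂‖ ^ 2) + 2 * (‖x₂ - x₃‖ ^ 2 + ‖x₃ - x₄‖ ^ 2)) := by
        gcongr <;> exact norm_add_sq_le _ _
    _ = _ := by ring

section

variable {Ω E : Type*} [MeasurableSpace Ω] {μ : Measure Ω} [IsProbabilityMeasure μ]
  [NormedAddCommGroup E]

theorem integral_norm_sub_sq_le_four_mul {f h : Ω → E} (hf : MemLp f 2 μ) (hh : MemLp h 2 μ)
    (a b c : E) :
    ∫ ω, ‖f ω - h ω‖ ^ 2 ∂μ ≤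
      4 * (∫ ω, ‖f ω - a‖ ^ 2 ∂μ + ‖a - b‖ ^ 2 + ‖b - c‖ ^ 2 + ∫ ω, ‖h ω - c‖ ^ 2 ∂μ) := by
  have hfa : Integrable (fun ω ↦ ‖f ω - a‖ ^ 2) μ :=
    (hf.sub (memLp_const a)).integrable_norm_pow two_ne_zero
  have hhc : Integrable (fun ω ↦ ‖h ω - c‖ ^ 2) μ :=
    (hh.sub (memLp_const c)).integrable_norm_pow two_ne_zero
  have hfab : Integrable (fun ω ↦ ‖f ω - a‖ ^ 2 + ‖a - b‖ ^ 2) μ :=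
    hfa.add (integrable_const _)
  have hfabc : Integrable (fun ω ↦ ‖f ω - a‖ ^ 2 + ‖a - b‖ ^ 2 + ‖b - c‖ ^ 2) μ :=
    hfab.add (integrable_const _)
  calc ∫ ω, ‖f ω - h ω‖ ^ 2 ∂μ
      ≤ ∫ ω, 4 * (‖f ω - a‖ ^ 2 + ‖a - b‖ ^ 2 + ‖b - c‖ ^ 2 + ‖h ω - c‖ ^ 2) ∂μ :=
        integral_mono ((hf.sub hh).integrable_norm_pow two_ne_zero)
          ((hfabc.add hhc).const_mul 4) fun ω ↦ by
            simpa only [norm_sub_rev (h ω) c] using norm_sub_sq_le_four_mul (f ω) a b c (h ω)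
    _ = _ := by
        rw [integral_const_mul, integral_add hfabc hhc, integral_add hfab (integrable_const _),
          integral_add hfa (integrable_const _)]
        simp

end

theorem expected_gradient_error_bound_general
    {Ω : Type*} [MeasurableSpace Ω] (μ : Measure Ω) [IsProbabilityMeasure μ]
    {E : Type*} [NormedAddCommGroup E] [NormedSpace ℝ E]
    {F : Type*} [NormedAddCommGroup F]
    (g ghat : Ω → E)
    (hgm : StronglyMeasurable g) (hghatm : StronglyMeasurable ghat)
    (hg2 : Integrable (fun ω => ‖g ω‖ ^ 2) μ)
    (hghat2 : Integrable (fun ω => ‖ghat ω‖ ^ 2) μ)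
    (Φ : F → Ω → E)
    (π πh : F) (L σg σghat : ℝ)
    (hvarg : ∫ ω, ‖g ω - ∫ ω', g ω' ∂μ‖ ^ 2 ∂μ ≤ σg ^ 2)
    (hvarghat : ∫ ω, ‖ghat ω - ∫ ω', ghat ω' ∂μ‖ ^ 2 ∂μ ≤ σghat ^ 2)
    (hmean : (∫ ω, ghat ω ∂μ) = ∫ ω, Φ πh ω ∂μ)
    (hLip : ∀ π' π'' : F,
      ‖(∫ ω, Φ π' ω ∂μ) - ∫ ω, Φ π'' ω ∂μ‖ ≤ L * ‖π' - π''‖) :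
    ∫ ω, ‖g ω - ghat ω‖ ^ 2 ∂μ
      ≤ 4 * (σg ^ 2 + σghat ^ 2 + L ^ 2 * ‖π - πh‖ ^ 2
              + ‖(∫ ω, g ω ∂μ) - ∫ ω, Φ π ω ∂μ‖ ^ 2) := by
  have hg : MemLp g 2 μ := (memLp_two_iff_integrable_sq_norm hgm.aestronglyMeasurable).2 hg2
  have hghat : MemLp ghat 2 μ :=
    (memLp_two_iff_integrable_sq_norm hghatm.aestronglyMeasurable).2 hghat2
  have hdrift : ‖(∫ ω, Φ π ω ∂μ) - ∫ ω, ghat ω ∂μ‖ ≤ L * ‖π - πh‖ := hmean ▸ hLip π πh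
  calc ∫ ω, ‖g ω - ghat ω‖ ^ 2 ∂μ
      ≤ 4 * (∫ ω, ‖g ω - ∫ ω', g ω' ∂μ‖ ^ 2 ∂μ + ‖(∫ ω, g ω ∂μ) - ∫ ω, Φ π ω ∂μ‖ ^ 2
          + ‖(∫ ω, Φ π ω ∂μ) - ∫ ω, ghat ω ∂μ‖ ^ 2
          + ∫ ω, ‖ghat ω - ∫ ω', ghat ω' ∂μ‖ ^ 2 ∂μ) :=
        integral_norm_sub_sq_le_four_mul hg hghat _ _ _
    _ ≤ 4 * (σg ^ 2 + ‖(∫ ω, g ω ∂μ) - ∫ ω, Φ π ω ∂μ‖ ^ 2 + (L * ‖π - πh‖) ^ 2 + σghat ^ 2) := by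
        gcongr
    _ = _ := by ring

/-- Expected gradient-prediction-error bound (analogue of Lemma 4.3 of
Cheng et al.): `∫‖g − ĝ‖² ≤ 4(σ_g² + σ_ĝ² + L²‖π − π̂‖² + E(Φ))`, where
`E(Φ) = ‖∫g − ∫Φ(π)‖²` is the model bias at the policy `π`. -/
theorem expected_gradient_error_bound
    {Ω : Type*} [MeasurableSpace Ω] (μ : Measure Ω) [IsProbabilityMeasure μ]
    {E : Type*} [NormedAddCommGroup E] [NormedSpace ℝ E] [CompleteSpace E]
    {F : Type*} [NormedAddCommGroup F] [NormedSpace ℝ F]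
    (g ghat : Ω → E)
    (hgm : StronglyMeasurable g) (hghatm : StronglyMeasurable ghat)
    (hg2 : Integrable (fun ω => ‖g ω‖ ^ 2) μ)
    (hghat2 : Integrable (fun ω => ‖ghat ω‖ ^ 2) μ)
    (Φ : F → Ω → E) (hΦ : ∀ π' : F, Integrable (Φ π') μ)
    (π πh : F) (L σg σghat : ℝ)
    (hL : 0 ≤ L) (hσg : 0 ≤ σg) (hσghat : 0 ≤ σghat)
    (hvarg : ∫ ω, ‖g ω - ∫ ω', g ω' ∂μ‖ ^ 2 ∂μ ≤ σg ^ 2)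
    (hvarghat : ∫ ω, ‖ghat ω - ∫ ω', ghat ω' ∂μ‖ ^ 2 ∂μ ≤ σghat ^ 2)
    (hmean : (∫ ω, ghat ω ∂μ) = ∫ ω, Φ πh ω ∂μ)
    (hLip : ∀ π' π'' : F,
      ‖(∫ ω, Φ π' ω ∂μ) - ∫ ω, Φ π'' ω ∂μ‖ ≤ L * ‖π' - π''‖) :
    ∫ ω, ‖g ω - ghat ω‖ ^ 2 ∂μ
      ≤ 4 * (σg ^ 2 + σghat ^ 2 + L ^ 2 * ‖π - πh‖ ^ 2
              + ‖(∫ ω, g ω ∂μ) - ∫ ω, Φ π ω ∂μ‖ ^ 2) :=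
  expected_gradient_error_bound_general μ g ghat hgm hghatm hg2 hghat2 Φ π πh L σg σghat hvarg
    hvarghat hmean hLip
end

section
/- For every real p ≥ 0 there exists a constant C > 0 (depending only on p) such that for every natural number N ≥ 1: Σ_{n=1}^N n^{2p}·√n / ( Σ_{m=1}^n m^p ) ≤ C·N^{p + 1/2}. -/
/-!
Comparison with `∫₀ⁿ x ^ p dx` gives `∑_{m ≤ n} m ^ p ≥ n ^ (p + 1) / (p + 1)`, so the `n`-th term is
at most `(p + 1) n ^ (p - 1/2) ≤ (p + 1) N ^ p / √n`; and `∑_{n ≤ N} 1 / √n ≤ 2 √N` because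
`1 / √n ≤ 2 (√n - √(n - 1))` telescopes.
-/

open Finset

theorem rpow_add_one_div_le_sum_Icc_rpow {p : ℝ} (hp : 0 ≤ p) (n : ℕ) :
    (n : ℝ) ^ (p + 1) / (p + 1) ≤ ∑ m ∈ Icc 1 n, (m : ℝ) ^ p := by
  have hmono : MonotoneOn (fun x : ℝ => x ^ p) (Set.Icc 0 (0 + n)) :=
    fun x hx y _ hxy => Real.rpow_le_rpow hx.1 hxy hp
  have h := hmono.integral_le_sum
  rw [zero_add, integral_rpow (Or.inl (by linarith)),
    Real.zero_rpow (by linarith), sub_zero] at h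
  convert h using 1
  simp only [zero_add]
  rw [range_eq_Ico, sum_Ico_add' (fun m : ℕ => (m : ℝ) ^ p), zero_add, Ico_add_one_right_eq_Icc]

theorem rpow_two_mul_mul_sqrt_div_sum_Icc_rpow_le {p : ℝ} (hp : 0 ≤ p) {n : ℕ} (hn : 1 ≤ n) :
    (n : ℝ) ^ (2 * p) * √n / ∑ m ∈ Icc 1 n, (m : ℝ) ^ p ≤ (p + 1) * (n : ℝ) ^ (p - 1 / 2) := by
  have hpos : (0 : ℝ) < n := by exact_mod_cast hn
  calc (n : ℝ) ^ (2 * p) * √n / ∑ m ∈ Icc 1 n, (m : ℝ) ^ p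
      ≤ (n : ℝ) ^ (2 * p) * √n / ((n : ℝ) ^ (p + 1) / (p + 1)) := by
        gcongr
        exact rpow_add_one_div_le_sum_Icc_rpow hp n
    _ = (p + 1) * (n : ℝ) ^ (p - 1 / 2) := by
      rw [Real.sqrt_eq_rpow, ← Real.rpow_add hpos, div_div_eq_mul_div, mul_comm, mul_div_assoc,
        ← Real.rpow_sub hpos]
      ring_nf

theorem div_sqrt_le_two_mul_sqrt_sub_sqrt {x y : ℝ} (hx : 0 ≤ x) (hxy : x ≤ y) :
    (y - x) / √y ≤ 2 * (√y - √x) := by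
  rcases hxy.eq_or_lt with rfl | hlt
  · simp
  have hy : 0 < √y := Real.sqrt_pos.mpr (hx.trans_lt hlt)
  have hsqrt : √x ≤ √y := Real.sqrt_le_sqrt hlt.le
  rw [div_le_iff₀ hy]
  nlinarith [Real.sq_sqrt hx, Real.sq_sqrt (hx.trans hlt.le), Real.sqrt_nonneg x]

theorem sum_Icc_inv_sqrt_le (N : ℕ) : ∑ n ∈ Icc 1 N, 1 / √n ≤ 2 * √N := by
  induction N with
  | zero => simp
  | succ N ih =>
    rw [sum_Icc_succ_top (by omega)]
    have hstep := div_sqrt_le_two_mul_sqrt_sub_sqrt (Nat.cast_nonneg N)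
      (Nat.cast_le.mpr N.le_succ)
    push_cast at hstep ⊢
    rw [add_sub_cancel_left] at hstep
    linarith

theorem sum_Icc_rpow_sub_half_le {p : ℝ} (hp : 0 ≤ p) (N : ℕ) :
    ∑ n ∈ Icc 1 N, (n : ℝ) ^ (p - 1 / 2) ≤ 2 * (N : ℝ) ^ (p + 1 / 2) := by
  have hterm : ∀ n ∈ Icc 1 N, (n : ℝ) ^ (p - 1 / 2) ≤ (N : ℝ) ^ p * (1 / √n) := by
    intro n hn
    obtain ⟨hn1, hnN⟩ := mem_Icc.mp hn
    have hpos : (0 : ℝ) < n := by exact_mod_cast hn1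
    rw [Real.rpow_sub hpos, ← Real.sqrt_eq_rpow, mul_one_div]
    gcongr
  calc ∑ n ∈ Icc 1 N, (n : ℝ) ^ (p - 1 / 2)
      ≤ (N : ℝ) ^ p * ∑ n ∈ Icc 1 N, 1 / √n := by rw [mul_sum]; exact sum_le_sum hterm
    _ ≤ (N : ℝ) ^ p * (2 * √N) := by gcongr; exact sum_Icc_inv_sqrt_le N
    _ = 2 * (N : ℝ) ^ (p + 1 / 2) := by
      rw [Real.rpow_add' (Nat.cast_nonneg N) (by positivity), Real.sqrt_eq_rpow]; ring

/-- Key summation estimate of the PicCoLO regret analysis: for monomial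
weights `w_n = n^p` and adaptive regularization strength
`α_n = w_{1:n}/√n`, the error sum `∑_{n=1}^N n^{2p}√n / w_{1:n}` is
`O(N^{p+1/2})`. -/
theorem piccolo_error_sum_estimate (p : ℝ) (hp : 0 ≤ p) :
    ∃ C : ℝ, 0 < C ∧ ∀ N : ℕ, 1 ≤ N →
      ∑ n ∈ Finset.Icc 1 N,
          ((n : ℝ) ^ (2 * p) * Real.sqrt n) / (∑ m ∈ Finset.Icc 1 n, (m : ℝ) ^ p)
        ≤ C * (N : ℝ) ^ (p + 1 / 2) := by
  refine ⟨2 * (p + 1), by positivity, fun N _ => ?_⟩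
  calc ∑ n ∈ Icc 1 N, (n : ℝ) ^ (2 * p) * √n / ∑ m ∈ Icc 1 n, (m : ℝ) ^ p
      ≤ ∑ n ∈ Icc 1 N, (p + 1) * (n : ℝ) ^ (p - 1 / 2) :=
        sum_le_sum fun n hn => rpow_two_mul_mul_sqrt_div_sum_Icc_rpow_le hp (mem_Icc.mp hn).1
    _ ≤ (p + 1) * (2 * (N : ℝ) ^ (p + 1 / 2)) := by
        rw [← mul_sum]; gcongr; exact sum_Icc_rpow_sub_half_le hp N
    _ = 2 * (p + 1) * (N : ℝ) ^ (p + 1 / 2) := by ring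
end
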